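/- The mixture-coupling distance MW_1 upper-bounds W_1: for two finite mixtures P = Σ_k π_k P_k and Q = Σ_{k'} ρ_{k'} Q_{k'} of probability measures with finite first moments, W_1(P, Q) ≤ min_{w ∈ Π(π,ρ)} Σ_{k,k'} w_{k,k'} W_1(P_k, Q_{k'}). -/

import Mathlib

open MeasureTheory

/-- Wasserstein-1 distance (primal/coupling formulation). -/
noncomputable def W1 {X : Type*} [MeasurableSpace X] [PseudoMetricSpace X]
    (μ ν : Measure X) : ℝ :=
  sInf {r : ℝ | ∃ π : Measure (X × X), IsProbabilityMeasure π ∧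
    π.fst = μ ∧ π.snd = ν ∧ r = ∫ p, dist p.1 p.2 ∂π}

/-- Couplings of two finite weight vectors: nonnegative matrices with row sums `π`
and column sums `ρ`. -/
def MixCouplings (K K' : ℕ) (π : Fin K → ℝ) (ρ : Fin K' → ℝ) :
    Set (Fin K → Fin K' → ℝ) :=
  {w | (∀ k k', 0 ≤ w k k') ∧ (∀ k, ∑ k', w k k' = π k) ∧ (∀ k', ∑ k, w k k' = ρ k')}

section Aux

variable {X : Type*} [MeasurableSpace X] [PseudoMetricSpace X]

lemma W1_set_nonneg (μ ν : Measure X) :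
    ∀ r ∈ {r : ℝ | ∃ π : Measure (X × X), IsProbabilityMeasure π ∧
      π.fst = μ ∧ π.snd = ν ∧ r = ∫ p, dist p.1 p.2 ∂π}, 0 ≤ r := by
  rintro r ⟨γ, _, _, _, rfl⟩
  exact integral_nonneg fun p => dist_nonneg

lemma W1_nonneg (μ ν : Measure X) : 0 ≤ W1 μ ν :=
  Real.sInf_nonneg (W1_set_nonneg μ ν)

lemma W1_set_nonempty [OpensMeasurableSpace X]
    (μ ν : Measure X) [IsProbabilityMeasure μ] [IsProbabilityMeasure ν] :
    {r : ℝ | ∃ π : Measure (X × X), IsProbabilityMeasure π ∧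
      π.fst = μ ∧ π.snd = ν ∧ r = ∫ p, dist p.1 p.2 ∂π}.Nonempty :=
  ⟨∫ p, dist p.1 p.2 ∂(μ.prod ν), μ.prod ν, inferInstance,
    Measure.fst_prod, Measure.snd_prod, rfl⟩

lemma fst_finset_sum {ι : Type*} (s : Finset ι) (μ : ι → Measure (X × X)) :
    (∑ i ∈ s, μ i).fst = ∑ i ∈ s, (μ i).fst := by
  classical
  induction s using Finset.induction_on with
  | empty => simp [Measure.fst]
  | insert _ _ h ih => simp [Finset.sum_insert h, Measure.fst_add, ih]

lemma snd_finset_sum {ι : Type*} (s : Finset ι) (μ : ι → Measure (X × X)) :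
    (∑ i ∈ s, μ i).snd = ∑ i ∈ s, (μ i).snd := by
  classical
  induction s using Finset.induction_on with
  | empty => simp [Measure.snd]
  | insert _ _ h ih => simp [Finset.sum_insert h, Measure.snd_add, ih]

lemma fst_smul (c : ENNReal) (μ : Measure (X × X)) : (c • μ).fst = c • μ.fst :=
  Measure.map_smul c μ Prod.fst

lemma snd_smul (c : ENNReal) (μ : Measure (X × X)) : (c • μ).snd = c • μ.snd :=
  Measure.map_smul c μ Prod.snd

end Aux

/-- The mixture-coupling distance upper-bounds `W₁`: for finite mixtures
`P = ∑ k π_k P_k` and `Q = ∑ k' ρ_{k'} Q_{k'}` of probability measures with finite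
first moments on a Polish metric space,
`W₁(P, Q) ≤ inf_{w ∈ Π(π,ρ)} ∑_{k,k'} w_{k,k'} W₁(P_k, Q_{k'})`. -/
theorem W1_le_mixture_coupling
    {X : Type*} [MeasurableSpace X] [MetricSpace X] [TopologicalSpace.SeparableSpace X] [CompleteSpace X]
    [BorelSpace X] (K K' : ℕ)
    (P : Fin K → Measure X) (Q : Fin K' → Measure X)
    (hP : ∀ k, IsProbabilityMeasure (P k)) (hQ : ∀ k', IsProbabilityMeasure (Q k'))
    (x₀ : X)
    (hmomP : ∀ k, Integrable (fun x => dist x x₀) (P k))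
    (hmomQ : ∀ k', Integrable (fun x => dist x x₀) (Q k'))
    (π : Fin K → ℝ) (ρ : Fin K' → ℝ)
    (hπ : ∀ k, 0 ≤ π k) (hπ1 : ∑ k, π k = 1)
    (hρ : ∀ k', 0 ≤ ρ k') (hρ1 : ∑ k', ρ k' = 1) :
    W1 (∑ k, ENNReal.ofReal (π k) • P k) (∑ k', ENNReal.ofReal (ρ k') • Q k')
      ≤ sInf {r : ℝ | ∃ w ∈ MixCouplings K K' π ρ,
          r = ∑ k, ∑ k', w k k' * W1 (P k) (Q k')} := by
  classical
  have hne : (∑ k, ∑ k', (π k * ρ k') * W1 (P k) (Q k')) ∈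
      {r : ℝ | ∃ w ∈ MixCouplings K K' π ρ,
        r = ∑ k, ∑ k', w k k' * W1 (P k) (Q k')} := by
    refine ⟨fun k k' => π k * ρ k', ⟨fun k k' => mul_nonneg (hπ k) (hρ k'), ?_, ?_⟩, rfl⟩
    · intro k; rw [← Finset.mul_sum, hρ1, mul_one]
    · intro k'; rw [← Finset.sum_mul, hπ1, one_mul]
  refine le_csInf ⟨_, hne⟩ ?_
  rintro r ⟨w, ⟨hw0, hwrow, hwcol⟩, rfl⟩
  -- show W1 P Q ≤ ∑ w * W1
  refine le_of_forall_pos_le_add fun ε hε => ?_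
  -- choose near optimal couplings
  have hchoice : ∀ k k', ∃ γ : Measure (X × X), IsProbabilityMeasure γ ∧
      γ.fst = P k ∧ γ.snd = Q k' ∧ (∫ p, dist p.1 p.2 ∂γ) < W1 (P k) (Q k') + ε := by
    intro k k'
    have := hP k; have := hQ k'
    obtain ⟨a, ⟨γ, h1, h2, h3, h4⟩, ha⟩ :=
      Real.lt_sInf_add_pos (W1_set_nonempty (P k) (Q k')) hε
    exact ⟨γ, h1, h2, h3, h4 ▸ ha⟩
  choose γ hγprob hγfst hγsnd hγcost using hchoice
  set Γ : Measure (X × X) := ∑ k, ∑ k', ENNReal.ofReal (w k k') • γ k k' with hΓ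
  have hw1 : ∑ k, ∑ k', w k k' = 1 := by
    rw [Finset.sum_congr rfl fun k _ => hwrow k, hπ1]
  have hΓprob : IsProbabilityMeasure Γ := by
    constructor
    simp only [hΓ, Measure.finset_sum_apply, Measure.smul_apply, smul_eq_mul]
    have : ∀ k k', (γ k k') Set.univ = 1 := fun k k' => (hγprob k k').measure_univ
    simp_rw [this, mul_one]
    rw [← ENNReal.ofReal_one, ← hw1]
    rw [Finset.sum_congr rfl fun k _ =>
      (ENNReal.ofReal_sum_of_nonneg fun k' _ => hw0 k k').symm]
    exact (ENNReal.ofReal_sum_of_nonneg fun k _ =>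
      Finset.sum_nonneg fun k' _ => hw0 k k').symm
  have hΓfst : Γ.fst = ∑ k, ENNReal.ofReal (π k) • P k := by
    rw [hΓ, fst_finset_sum]
    refine Finset.sum_congr rfl fun k _ => ?_
    rw [fst_finset_sum]
    have : ∀ k' ∈ Finset.univ, (ENNReal.ofReal (w k k') • γ k k').fst
        = ENNReal.ofReal (w k k') • P k := fun k' _ => by rw [fst_smul, hγfst]
    rw [Finset.sum_congr rfl this, ← Finset.sum_smul, ← hwrow k,
      ENNReal.ofReal_sum_of_nonneg fun k' _ => hw0 k k']
  have hΓsnd : Γ.snd = ∑ k', ENNReal.ofReal (ρ k') • Q k' := by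
    rw [hΓ, Finset.sum_comm]
    rw [snd_finset_sum]
    refine Finset.sum_congr rfl fun k' _ => ?_
    rw [snd_finset_sum]
    have : ∀ k ∈ Finset.univ, (ENNReal.ofReal (w k k') • γ k k').snd
        = ENNReal.ofReal (w k k') • Q k' := fun k _ => by rw [snd_smul, hγsnd]
    rw [Finset.sum_congr rfl this, ← Finset.sum_smul, ← hwcol k',
      ENNReal.ofReal_sum_of_nonneg fun k _ => hw0 k k']
  have hbdd : BddBelow {r : ℝ | ∃ τ : Measure (X × X), IsProbabilityMeasure τ ∧
      τ.fst = (∑ k, ENNReal.ofReal (π k) • P k) ∧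
      τ.snd = (∑ k', ENNReal.ofReal (ρ k') • Q k') ∧ r = ∫ p, dist p.1 p.2 ∂τ} :=
    ⟨0, fun r hr => W1_set_nonneg _ _ r hr⟩
  have hmem : (∫ p, dist p.1 p.2 ∂Γ) ∈ {r : ℝ | ∃ τ : Measure (X × X),
      IsProbabilityMeasure τ ∧ τ.fst = (∑ k, ENNReal.ofReal (π k) • P k) ∧
      τ.snd = (∑ k', ENNReal.ofReal (ρ k') • Q k') ∧ r = ∫ p, dist p.1 p.2 ∂τ} :=
    ⟨Γ, hΓprob, hΓfst, hΓsnd, rfl⟩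
  have hW1le : W1 (∑ k, ENNReal.ofReal (π k) • P k) (∑ k', ENNReal.ofReal (ρ k') • Q k')
      ≤ ∫ p, dist p.1 p.2 ∂Γ := csInf_le hbdd hmem
  by_cases hint : ∀ k k', 0 < w k k' → Integrable (fun p : X × X => dist p.1 p.2) (γ k k')
  · -- all integrable case
    have hint' : ∀ k k', Integrable (fun p : X × X => dist p.1 p.2)
        (ENNReal.ofReal (w k k') • γ k k') := by
      intro k k'
      rcases eq_or_lt_of_le (hw0 k k') with h | h
      · rw [← h]; simp
      · exact (hint k k' h).smul_measure ENNReal.ofReal_ne_top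
    have hcost : (∫ p, dist p.1 p.2 ∂Γ)
        = ∑ k, ∑ k', w k k' * ∫ p, dist p.1 p.2 ∂(γ k k') := by
      rw [hΓ, integral_finset_sum_measure fun k _ =>
        integrable_finset_sum_measure.2 fun k' _ => hint' k k']
      refine Finset.sum_congr rfl fun k _ => ?_
      rw [integral_finset_sum_measure fun k' _ => hint' k k']
      refine Finset.sum_congr rfl fun k' _ => ?_
      rw [integral_smul_measure, ENNReal.toReal_ofReal (hw0 k k'), smul_eq_mul]
    refine hW1le.trans ?_
    rw [hcost]
    have : ∀ k, ∑ k', w k k' * ∫ p, dist p.1 p.2 ∂(γ k k')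
        ≤ ∑ k', w k k' * (W1 (P k) (Q k') + ε) := fun k =>
      Finset.sum_le_sum fun k' _ =>
        mul_le_mul_of_nonneg_left (hγcost k k').le (hw0 k k')
    calc ∑ k, ∑ k', w k k' * ∫ p, dist p.1 p.2 ∂(γ k k')
        ≤ ∑ k, ∑ k', w k k' * (W1 (P k) (Q k') + ε) :=
          Finset.sum_le_sum fun k _ => this k
      _ = ∑ k, ∑ k', w k k' * W1 (P k) (Q k') + ε := by
          have heq : ∑ k, ∑ k', w k k' * (W1 (P k) (Q k') + ε)
              = (∑ k, ∑ k', w k k' * W1 (P k) (Q k')) + (∑ k, ∑ k', w k k') * ε := by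
            rw [Finset.sum_mul, ← Finset.sum_add_distrib]
            refine Finset.sum_congr rfl fun k _ => ?_
            rw [Finset.sum_mul, ← Finset.sum_add_distrib]
            exact Finset.sum_congr rfl fun k' _ => by ring
          rw [heq, hw1, one_mul]
  · -- non-integrable case: the mixture integral is 0
    push_neg at hint
    obtain ⟨k, k', hwpos, hni⟩ := hint
    have hle : ENNReal.ofReal (w k k') • γ k k' ≤ Γ := by
      refine Measure.le_iff'.mpr fun s => ?_
      rw [hΓ]
      simp only [Measure.finset_sum_apply, Measure.smul_apply, smul_eq_mul]
      have h1 : ENNReal.ofReal (w k k') * γ k k' s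
          ≤ ∑ j, ENNReal.ofReal (w k j) * γ k j s :=
        Finset.single_le_sum (f := fun j => ENNReal.ofReal (w k j) * γ k j s)
          (fun j _ => zero_le) (Finset.mem_univ k')
      have h2 : ∑ j, ENNReal.ofReal (w k j) * γ k j s
          ≤ ∑ i, ∑ j, ENNReal.ofReal (w i j) * γ i j s :=
        Finset.single_le_sum (f := fun i => ∑ j, ENNReal.ofReal (w i j) * γ i j s)
          (fun i _ => zero_le) (Finset.mem_univ k)
      exact h1.trans h2
    have hniΓ : ¬ Integrable (fun p : X × X => dist p.1 p.2) Γ := by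
      intro h
      exact hni ((integrable_smul_measure
        (by simp [ENNReal.ofReal_eq_zero, not_le, hwpos] : ENNReal.ofReal (w k k') ≠ 0)
        ENNReal.ofReal_ne_top).mp (h.mono_measure hle))
    rw [integral_undef hniΓ] at hW1le
    refine hW1le.trans ?_
    have : (0:ℝ) ≤ ∑ k, ∑ k', w k k' * W1 (P k) (Q k') :=
      Finset.sum_nonneg fun k _ => Finset.sum_nonneg fun k' _ =>
        mul_nonneg (hw0 k k') (W1_nonneg _ _)
    linarith
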